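/- arXiv:2102.06004 — 4 statements merged into one kernel-verified Lean document; each statement's English description precedes it below -/
import Mathlib

section
/- Let B0, B1, C0, C1 be nonnegative reals with C0 > ((1-α)/2)·P0·n, C1 > ((1-α)/2)·P1·n, and B0 + B1 < (3α/2)·n, where 0 < P0 ≤ P1, 0 ≤ α < 1/2, and n > 0. Then B0/(C0+B0) + B1/(C1+B1) < 6α/(2(1-α)P0 + 3α) ≤ 2α/(P0/3 + α). -/
/-- bounding the total corruption-induced deviation for demographic parity. -/
theorem stmt0 (α P0 P1 n B0 B1 C0 C1 : ℝ)
    (hα0 : 0 ≤ α) (hα1 : α < 1/2)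
    (hP0 : 0 < P0) (hP01 : P0 ≤ P1)
    (hn : 0 < n)
    (hB0 : 0 ≤ B0) (hB1 : 0 ≤ B1)
    (hC0 : (1 - α)/2 * P0 * n < C0)
    (hC1 : (1 - α)/2 * P1 * n < C1)
    (hB : B0 + B1 < 3*α/2 * n) :
    B0/(C0 + B0) + B1/(C1 + B1) < 6*α/(2*(1-α)*P0 + 3*α) ∧
    6*α/(2*(1-α)*P0 + 3*α) ≤ 2*α/(P0/3 + α) := by
  set D : ℝ := (1 - α)/2 * P0 * n with hDdef
  have h1α : 0 < 1 - α := by linarith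
  have hD : 0 < D := by positivity
  have hDC0 : D < C0 := hC0
  have hDC1 : D < C1 := lt_of_le_of_lt (by nlinarith) hC1
  have hαpos : 0 < α := by nlinarith
  set S : ℝ := 3*α/2 * n with hSdef
  have hS : 0 < S := by positivity
  have hden : 0 < 2*(1-α)*P0 + 3*α := by positivity
  constructor
  · -- main inequality
    have step0 : B0/(C0 + B0) ≤ B0/(D + B0) := by
      gcongr
    have step1 : B1/(C1 + B1) ≤ B1/(D + B1) := by
      gcongr
    have key : B0/(D + B0) + B1/(D + B1) ≤ 2*(B0+B1)/(2*D + (B0+B1)) := by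
      have h0 : 0 < D + B0 := by linarith
      have h1 : 0 < D + B1 := by linarith
      have h2 : 0 < 2*D + (B0+B1) := by linarith
      rw [div_add_div _ _ (ne_of_gt h0) (ne_of_gt h1), div_le_div_iff₀ (by positivity) h2]
      nlinarith [sq_nonneg (B0 - B1), hD.le, mul_nonneg hB0 hB1]
    have mono : 2*(B0+B1)/(2*D + (B0+B1)) < 2*S/(2*D + S) := by
      rw [div_lt_div_iff₀ (by linarith) (by linarith)]
      nlinarith
    have eqfinal : 2*S/(2*D + S) = 6*α/(2*(1-α)*P0 + 3*α) := by
      rw [div_eq_div_iff (by positivity : (0:ℝ) < 2*D + S).ne' hden.ne']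
      simp only [hSdef, hDdef]
      ring
    linarith [step0, step1, key, mono, eqfinal.le, eqfinal.ge]
  · -- comparison of the two bounds
    have h3 : 6*α/(2*(1-α)*P0 + 3*α) ≤ 6*α/(P0 + 3*α) := by
      gcongr
      nlinarith
    have h4 : 6*α/(P0 + 3*α) = 2*α/(P0/3 + α) := by
      rw [div_eq_div_iff (by positivity : (0:ℝ) < P0 + 3*α).ne' (by positivity : (0:ℝ) < P0/3 + α).ne']
      ring
    linarith
end

section
/- Let η ≥ 0 and α = η/(1+η). If a point with distribution mass η/2 is retained with probability 1−α, then (η/2)·(1−α) = α/2. Consequently, under the adversary that replaces each marked point (marked independently with probability α) by (x3, ¬i, i) or (x4, i, ¬i) each with probability 1/2, the induced corrupted-data distributions ℙ'_0 and ℙ'_1 (arising from clean distributions ℙ_0 and ℙ_1 of the construction above) are equal as distributions on X × {0,1} × {0,1}. -/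
/-- The clean distribution `ℙ_i` (for `i : Bool`, with `¬i = !i`) of the
demographic-parity lower-bound construction, as a mass function on
`Fin 4 × Bool × Bool` (point, protected attribute, label). -/
noncomputable def parDistI (P0 η : ℝ) (i : Bool) : Fin 4 × Bool × Bool → ℝ := fun z =>
  if z = (0, true, true) then 1 - P0 - η/2
  else if z = (1, false, false) then P0 - η/2
  else if z = (2, i, !i) then η/2
  else if z = (3, !i, i) then η/2
  else 0

/-- Single-sample marginal of the corrupted data: a draw from `ℙ_i` kept with probability
`1 - α`, and with probability `α` replaced by `(x₃, ¬i, i)` or `(x₄, i, ¬i)`, each with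
probability `1/2`. -/
noncomputable def parCorr (P0 η α : ℝ) (i : Bool) : Fin 4 × Bool × Bool → ℝ := fun z =>
  (1 - α) * parDistI P0 η i z +
    α * ((if z = (2, !i, i) then 1/2 else 0) + (if z = (3, i, !i) then 1/2 else 0))

/-- with `α = η/(1+η)` one has `(η/2)(1-α) = α/2`, and the induced
corrupted-data distributions coincide: `ℙ'₀ = ℙ'₁`. -/
theorem stmt8 (P0 η α : ℝ) (hη : 0 ≤ η) (hα : α = η/(1+η)) :
    η/2 * (1 - α) = α/2 ∧ parCorr P0 η α false = parCorr P0 η α true := by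
  have hpos : (1 : ℝ) + η ≠ 0 := by positivity
  have key : η/2 * (1 - α) = α/2 := by
    subst hα; field_simp; ring_nf
  refine ⟨key, ?_⟩
  funext z
  obtain ⟨x, a, b⟩ := z
  simp only [parCorr, parDistI, Bool.not_true, Bool.not_false, Prod.mk.injEq]
  fin_cases x <;> cases a <;> cases b <;> simp <;> linarith [key]
end

section
/- Let (Z_i)_{i=1..n} be i.i.d. samples from a distribution ℙ on a space Z, let E ⊆ Z be an event with ℙ(E) = q > 0, and let F ⊆ Z be another event. Let γ = ℙ(F | E) and let γ̂ = (#{i : Z_i ∈ E ∩ F})/(#{i : Z_i ∈ E}) with convention 0/0 = 0. Then for any t > 0, ℙ(|γ̂ − γ| > t) ≤ exp(−q·n/8) + 2·exp(−t²·q·n). -/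
/-!
Let `A = {i | Zᵢ ∈ E}` and `B = {i | Zᵢ ∈ E ∩ F} ⊆ A`. By independence, the index sets take given
values `A, B` with probability `(γq)^|B| ((1-γ)q)^(|A|-|B|) (1-q)^(n-|A|)`; summing over all pairs,
any event in `(|A|, |B|)` has at most its probability under `m ~ Bin(n, q)` followed by
`k ~ Bin(m, γ)`, and `γ̂ = k / m`. When `m > qn/2`, Hoeffding's bound for the `m/4`-sub-Gaussian
centred binomial gives `ℙ(|k/m - γ| > t) ≤ 2 exp(-2t²m) ≤ 2 exp(-t²qn)`, and the event `m ≤ qn/2`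
has probability at most `exp(-qn/8)` by a multiplicative Chernoff bound.
-/

open MeasureTheory ProbabilityTheory Real Finset
open scoped Classical unitInterval NNReal

lemma bernoulli_mgf_le (p : I) (l : ℝ) :
    p * exp l + (1 - p) ≤ exp (l * p + l ^ 2 / 8) := by
  have hIcc : ∀ᵐ x ∂Ber((1 : ℝ), 0, p), id x ∈ Set.Icc (0 : ℝ) 1 := by
    rw [ae_iff]
    exact bernoulliMeasure_apply_of_notMem_of_notMem p measurableSet_Icc.compl (by simp) (by simp)
  have hmgf := (hasSubgaussianMGF_of_mem_Icc aemeasurable_id hIcc).mgf_le l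
  simp only [mgf, integral_bernoulliMeasure, id, smul_eq_mul] at hmgf
  norm_num at hmgf
  have e1 : exp (l * p) * exp (l * (1 - p)) = exp l := by rw [← exp_add]; ring_nf
  have e2 : exp (l * p) * exp (-(l * p)) = 1 := by rw [← exp_add]; simp
  calc p * exp l + (1 - p)
      = exp (l * p) * (p * exp (l * (1 - p)) + (1 - p) * exp (-(l * p))) := by
        linear_combination (-p) * e1 - (1 - p) * e2
    _ ≤ exp (l * p) * exp (l ^ 2 / 8) := by gcongr; exact hmgf.trans_eq (by ring_nf)
    _ = exp (l * p + l ^ 2 / 8) := (exp_add _ _).symm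

lemma mgf_binomial (n : ℕ) (p : I) (l : ℝ) :
    mgf (fun k : ℕ ↦ (k : ℝ)) Bin(n, p) l = (p * exp l + (1 - p)) ^ n := by
  rw [mgf, integral_binomial, add_pow, Nat.range_succ_eq_Iic]
  refine Finset.sum_congr rfl fun k _ ↦ ?_
  rw [smul_eq_mul, mul_pow, ← exp_nat_mul]
  ring_nf

lemma hasSubgaussianMGF_binomial (n : ℕ) (p : I) :
    HasSubgaussianMGF (fun k : ℕ ↦ (k : ℝ) - n * p) (n / 4 : ℝ≥0) Bin(n, p) where
  integrable_exp_mul _ := integrable_binomial _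
  mgf_le l := by
    simp_rw [sub_eq_add_neg]
    rw [mgf_add_const, mgf_binomial]
    calc (p * exp l + (1 - p)) ^ n * exp (l * -(n * p))
        ≤ exp (l * p + l ^ 2 / 8) ^ n * exp (l * -(n * p)) := by
          gcongr
          · have := unitInterval.nonneg p; have := unitInterval.one_minus_nonneg p; positivity
          · exact bernoulli_mgf_le p l
      _ = exp ((n / 4 : ℝ≥0) * l ^ 2 / 2) := by
          rw [← exp_nat_mul, ← exp_add]; push_cast; ring_nf

lemma binomial_real_abs_sub_gt_le (n : ℕ) (p : I) {t : ℝ} (ht : 0 ≤ t) :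
    Bin(n, p).real {k | t * n < |(k : ℝ) - n * p|} ≤ 2 * exp (-(2 * t ^ 2 * n)) := by
  rcases n.eq_zero_or_pos with rfl | hn
  · simp [binomial_zero, measureReal_def]
  have hX := hasSubgaussianMGF_binomial n p
  have htn : 0 ≤ t * n := by positivity
  have htail : ∀ {X : ℕ → ℝ}, HasSubgaussianMGF X (n / 4 : ℝ≥0) Bin(n, p) →
      Bin(n, p).real {k | t * n ≤ X k} ≤ exp (-(2 * t ^ 2 * n)) := fun hX ↦
    (hX.measure_ge_le htn).trans_eq (by push_cast; field_simp; ring_nf)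
  calc Bin(n, p).real {k | t * n < |(k : ℝ) - n * p|}
      ≤ Bin(n, p).real ({k | t * n ≤ (k : ℝ) - n * p} ∪ {k | t * n ≤ -((k : ℝ) - n * p)}) := by
        refine measureReal_mono (fun k hk ↦ ?_)
        simp only [Set.mem_ofPred_eq, Set.mem_union] at hk ⊢
        rcases lt_abs.1 hk with h | h
        exacts [.inl h.le, .inr h.le]
    _ ≤ _ := (measureReal_union_le _ _).trans <|
        (add_le_add (htail hX) (htail hX.neg)).trans_eq (two_mul _).symm

lemma binomial_real_abs_div_sub_gt_le {m : ℕ} (hm : 0 < m) (p : I) {t : ℝ} (ht : 0 ≤ t) :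
    Bin(m, p).real {k | t < |(k : ℝ) / m - p|} ≤ 2 * exp (-(2 * t ^ 2 * m)) := by
  have hm0 : (0 : ℝ) < m := Nat.cast_pos.2 hm
  rw [show {k : ℕ | t < |(k : ℝ) / m - p|} = {k : ℕ | t * m < |(k : ℝ) - m * p|} by
    ext k
    rw [Set.mem_ofPred_eq, Set.mem_ofPred_eq, div_sub' hm0.ne', abs_div, abs_of_pos hm0,
      lt_div_iff₀ hm0]]
  exact binomial_real_abs_sub_gt_le m p ht

lemma binomial_real_le_half_mean_le (n : ℕ) (p : I) :
    Bin(n, p).real {k | (k : ℝ) ≤ p * n / 2} ≤ exp (-(p * n) / 8) := by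
  have hlog2 := Real.log_two_lt_d9
  -- Chernoff's bound at `λ = log 2`; the constant `1/8` comes from `(1 - log 2) / 2 > 1/8`.
  have hchernoff := measure_ge_le_exp_mul_mgf (X := fun k : ℕ ↦ -(k : ℝ)) (μ := Bin(n, p))
    (-(p * n / 2)) (log_pos one_lt_two).le (integrable_binomial _)
  rw [show (fun k : ℕ ↦ -(k : ℝ)) = -fun k : ℕ ↦ (k : ℝ) from rfl, mgf_neg, mgf_binomial,
    exp_neg (log 2), exp_log two_pos] at hchernoff
  simp only [neg_le_neg_iff, neg_mul_neg] at hchernoff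
  refine hchernoff.trans ?_
  have hp0 := unitInterval.nonneg p
  have hp1 := unitInterval.le_one p
  calc exp (log 2 * (p * n / 2)) * (p * 2⁻¹ + (1 - p)) ^ n
      ≤ exp (log 2 * (p * n / 2)) * exp (-(p / 2)) ^ n := by
        gcongr
        have := add_one_le_exp (-((p : ℝ) / 2))
        linarith
    _ = exp ((log 2 - 1) * (p * n / 2)) := by rw [← exp_nat_mul, ← exp_add]; ring_nf
    _ ≤ exp (-(p * n) / 8) := by
        gcongr
        nlinarith [mul_nonneg (Nat.cast_nonneg n : (0 : ℝ) ≤ n) hp0]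

lemma sum_powerset_sum_powerset_apply_card {α M : Type*} [AddCommMonoid M] (f : ℕ → ℕ → M)
    (s : Finset α) :
    ∑ A ∈ s.powerset, ∑ B ∈ A.powerset, f #A #B =
      ∑ m ∈ range (#s + 1), (#s).choose m • ∑ k ∈ range (m + 1), m.choose k • f m k := by
  rw [sum_congr rfl fun A _ ↦ sum_powerset_apply_card (f #A),
    sum_powerset_apply_card fun m ↦ ∑ k ∈ range (m + 1), m.choose k • f m k]

lemma prod_ite_mem_ite_mem {ι M : Type*} [Fintype ι] [CommMonoid M] {A B : Finset ι}
    (hBA : B ⊆ A) (a b c : M) :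
    ∏ i, (if i ∈ A then (if i ∈ B then a else b) else c) =
      a ^ #B * b ^ (#A - #B) * c ^ (Fintype.card ι - #A) := by
  rw [prod_ite, prod_ite, filter_filter, filter_filter]
  simp only [prod_const]
  congr 3
  · exact congrArg card (by ext i; simpa using fun h ↦ hBA h)
  · rw [← card_sdiff_of_subset hBA]; congr 1; ext i; simp
  · rw [← card_compl]; congr 1; ext i; simp

lemma integral_binomial_real_binomial (N : ℕ) (q γ : I) (P : ℕ → ℕ → Prop) :
    ∫ m, Bin(m, γ).real {k | P m k} ∂Bin(N, q) =
      ∑ m ∈ range (N + 1), N.choose m • ∑ k ∈ range (m + 1), m.choose k •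
        if P m k then (γ * q : ℝ) ^ k * ((1 - γ) * q) ^ (m - k) * (1 - q) ^ (N - m) else 0 := by
  rw [integral_binomial, Nat.range_succ_eq_Iic]
  refine sum_congr rfl fun m _ ↦ ?_
  rw [← integral_indicator_one (MeasurableSet.of_discrete), integral_binomial,
    Nat.range_succ_eq_Iic, nsmul_eq_mul, mul_sum, smul_sum]
  refine sum_congr rfl fun k hk ↦ ?_
  simp only [nsmul_eq_mul, smul_eq_mul, Set.indicator_apply, Set.mem_ofPred_eq, mul_pow,
    Pi.one_apply]
  split_ifs
  · rw [← pow_mul_pow_sub (q : ℝ) (mem_Iic.1 hk)]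
    ring
  · simp

def atomCell {ι 𝓩 : Type*} (E F : Set 𝓩) (A B : Finset ι) (i : ι) : Set 𝓩 :=
  if i ∈ A then (if i ∈ B then E ∩ F else E \ F) else Eᶜ

lemma measurableSet_atomCell {ι 𝓩 : Type*} [MeasurableSpace 𝓩] {E F : Set 𝓩}
    (hE : MeasurableSet E) (hF : MeasurableSet F) (A B : Finset ι) (i : ι) :
    MeasurableSet (atomCell E F A B i) := by
  unfold atomCell
  split_ifs
  exacts [hE.inter hF, hE.diff hF, hE.compl]

lemma mem_atomCell_filter {ι 𝓩 : Type*} [Fintype ι] (z : ι → 𝓩) (E F : Set 𝓩) (i : ι) :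
    z i ∈ atomCell E F {j | z j ∈ E} {j | z j ∈ E ∩ F} i := by
  by_cases hE : z i ∈ E <;> by_cases hF : z i ∈ F <;> simp [atomCell, hE, hF]

lemma measureReal_iInter_preimage_of_iIndepFun {Ω ι 𝓩 : Type*} [MeasurableSpace Ω]
    [MeasurableSpace 𝓩] [Fintype ι] {μ : Measure Ω} {ν : Measure 𝓩}
    {Z : ι → Ω → 𝓩} (hmeas : ∀ i, Measurable (Z i)) (hindep : iIndepFun Z μ)
    (hlaw : ∀ i, μ.map (Z i) = ν) {s : ι → Set 𝓩} (hs : ∀ i, MeasurableSet (s i)) :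
    μ.real (⋂ i, Z i ⁻¹' s i) = ∏ i, ν.real (s i) := by
  rw [measureReal_def, hindep.meas_iInter fun i ↦ ⟨s i, hs i, rfl⟩, ENNReal.toReal_prod]
  refine prod_congr rfl fun i _ ↦ ?_
  rw [← hlaw i, map_measureReal_apply (hmeas i) (hs i), measureReal_def]

lemma setOf_subset_biUnion_atomCell {Ω ι 𝓩 : Type*} [Fintype ι] (Z : ι → Ω → 𝓩)
    (E F : Set 𝓩) (P : ℕ → ℕ → Prop) :
    {ω | P #{i | Z i ω ∈ E} #{i | Z i ω ∈ E ∩ F}} ⊆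
      ⋃ A ∈ (univ : Finset ι).powerset, ⋃ B ∈ A.powerset.filter (P #A #·),
        ⋂ i, Z i ⁻¹' atomCell E F A B i := by
  intro ω hω
  simp only [Set.mem_iUnion, Set.mem_iInter, Set.mem_preimage, mem_filter, mem_powerset]
  refine ⟨_, subset_univ _, ({i | Z i ω ∈ E ∩ F} : Finset ι), ⟨?_, hω⟩,
    fun i ↦ mem_atomCell_filter (Z · ω) E F i⟩
  exact fun i ↦ by simp +contextual

theorem measureReal_card_filter_le_integral_binomial {Ω ι 𝓩 : Type*} [MeasurableSpace Ω]
    [MeasurableSpace 𝓩] [Fintype ι] {μ : Measure Ω} [IsFiniteMeasure μ] {ν : Measure 𝓩}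
    [IsProbabilityMeasure ν] {Z : ι → Ω → 𝓩} (hmeas : ∀ i, Measurable (Z i))
    (hindep : iIndepFun Z μ) (hlaw : ∀ i, μ.map (Z i) = ν) {E F : Set 𝓩}
    (hE : MeasurableSet E) (hF : MeasurableSet F) {q γ : I} (hq : ν.real E = q)
    (hγ : ν.real (E ∩ F) = γ * q) (P : ℕ → ℕ → Prop) :
    μ.real {ω | P #{i | Z i ω ∈ E} #{i | Z i ω ∈ E ∩ F}} ≤
      ∫ m, Bin(m, γ).real {k | P m k} ∂Bin(Fintype.card ι, q) := by
  have hdiff : ν.real (E \ F) = (1 - γ) * q := by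
    linarith [measureReal_inter_add_sdiff (μ := ν) (s := E) hF]
  have hcompl : ν.real Eᶜ = 1 - q := by rw [measureReal_compl hE, probReal_univ, hq]
  have hatom : ∀ A B : Finset ι, B ⊆ A → μ.real (⋂ i, Z i ⁻¹' atomCell E F A B i) =
      (γ * q) ^ #B * ((1 - γ) * q) ^ (#A - #B) * (1 - q) ^ (Fintype.card ι - #A) := by
    intro A B hBA
    rw [measureReal_iInter_preimage_of_iIndepFun hmeas hindep hlaw
      (measurableSet_atomCell hE hF A B)]
    simp only [atomCell, apply_ite ν.real]
    rw [prod_ite_mem_ite_mem hBA, hγ, hdiff, hcompl]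
  let w (m k : ℕ) : ℝ :=
    if P m k then (γ * q : ℝ) ^ k * ((1 - γ) * q) ^ (m - k) * (1 - q) ^ (Fintype.card ι - m) else 0
  calc μ.real {ω | P #{i | Z i ω ∈ E} #{i | Z i ω ∈ E ∩ F}}
      ≤ ∑ A ∈ (univ : Finset ι).powerset, ∑ B ∈ A.powerset.filter (P #A #·),
          μ.real (⋂ i, Z i ⁻¹' atomCell E F A B i) :=
        (measureReal_mono (setOf_subset_biUnion_atomCell Z E F P) (measure_ne_top μ _)).trans <|
          (measureReal_biUnion_finset_le _ _).trans <|
            sum_le_sum fun A _ ↦ measureReal_biUnion_finset_le _ _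
    _ = ∑ A ∈ (univ : Finset ι).powerset, ∑ B ∈ A.powerset, w #A #B := by
        refine sum_congr rfl fun A _ ↦ ?_
        rw [sum_filter]
        exact sum_congr rfl fun B hB ↦ by rw [hatom A B (mem_powerset.1 hB)]
    _ = ∫ m, Bin(m, γ).real {k | P m k} ∂Bin(Fintype.card ι, q) := by
        rw [sum_powerset_sum_powerset_apply_card, card_univ, integral_binomial_real_binomial]

lemma integral_le_measureReal_add {α : Type*} [MeasurableSpace α] {μ : Measure α}
    [IsProbabilityMeasure μ] {f : α → ℝ} (hf : Integrable f μ) {s : Set α}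
    (hs : MeasurableSet s) {c : ℝ} (hf_mem : ∀ x ∈ s, f x ≤ 1) (hf_notMem : ∀ x ∉ s, f x ≤ c)
    (hc : 0 ≤ c) :
    ∫ x, f x ∂μ ≤ μ.real s + c := by
  have hind : Integrable (s.indicator 1) μ := (integrable_const (1 : ℝ)).indicator hs
  calc ∫ x, f x ∂μ ≤ ∫ x, (s.indicator 1 x + c) ∂μ := by
        refine integral_mono hf (hind.add (integrable_const c)) fun x ↦ ?_
        by_cases hx : x ∈ s
        · simp only [Set.indicator_of_mem hx, Pi.one_apply]; linarith [hf_mem x hx]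
        · simp only [Set.indicator_of_notMem hx, zero_add]; exact hf_notMem x hx
    _ = μ.real s + c := by
        rw [integral_add hind (integrable_const c),
          integral_indicator_one hs, integral_const, probReal_univ, one_smul]

/-- concentration of an empirical conditional-probability estimate.
`Z₁,…,Zₙ` are i.i.d. with law `ν`; `E` has probability `q > 0`, `γ = ν(F ∣ E)`, and
`γ̂` is the empirical estimate (with the convention `0/0 = 0`, which is Lean's default).
Then `ℙ(|γ̂ − γ| > t) ≤ exp(−qn/8) + 2 exp(−t²qn)`. -/
theorem stmt13 {Ω 𝓩 : Type*} [MeasurableSpace Ω] [MeasurableSpace 𝓩]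
    (μ : Measure Ω) [IsProbabilityMeasure μ]
    (ν : Measure 𝓩) [IsProbabilityMeasure ν]
    (n : ℕ) (Z : Fin n → Ω → 𝓩)
    (hmeas : ∀ i, Measurable (Z i))
    (hindep : iIndepFun Z μ)
    (hlaw : ∀ i, μ.map (Z i) = ν)
    (E F : Set 𝓩) (hE : MeasurableSet E) (hF : MeasurableSet F)
    (q γ : ℝ) (hq : q = (ν E).toReal) (hq0 : 0 < q)
    (hγ : γ = (ν (E ∩ F)).toReal / q)
    (γhat : Ω → ℝ)
    (hγhat : ∀ ω, γhat ω =
      ((Finset.univ.filter fun i => Z i ω ∈ E ∩ F).card : ℝ) /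
      ((Finset.univ.filter fun i => Z i ω ∈ E).card : ℝ))
    (t : ℝ) (ht : 0 < t) :
    μ {ω | t < |γhat ω - γ|} ≤
      ENNReal.ofReal (Real.exp (-(q * n)/8) + 2 * Real.exp (-(t^2 * q * n))) := by
  have hEF : ν.real (E ∩ F) ≤ q := hq ▸ measureReal_mono Set.inter_subset_left
  let q' : I := ⟨q, hq0.le, hq ▸ measureReal_le_one⟩
  let γ' : I := ⟨γ, hγ ▸ by positivity, hγ ▸ (div_le_one hq0).2 hEF⟩
  have hγq : ν.real (E ∩ F) = γ' * q' := by simp [γ', q', hγ, hq0.ne', measureReal_def]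
  have htail (m : ℕ) (hm : ¬ (m : ℝ) ≤ q * n / 2) :
      Bin(m, γ').real {k | t < |(k : ℝ) / m - γ|} ≤ 2 * exp (-(t ^ 2 * q * n)) := by
    have hm0 : 0 < m := by
      exact_mod_cast (by positivity : (0 : ℝ) ≤ q * n / 2).trans_lt (not_le.1 hm)
    refine (binomial_real_abs_div_sub_gt_le hm0 γ' ht.le).trans ?_
    have := mul_le_mul_of_nonneg_left (not_le.1 hm).le (sq_nonneg t)
    exact mul_le_mul_of_nonneg_left (exp_le_exp.2 (by linarith)) zero_le_two
  rw [← ENNReal.ofReal_toReal (measure_ne_top μ _), ← measureReal_def]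
  refine ENNReal.ofReal_le_ofReal ?_
  simp_rw [hγhat]
  calc _ ≤ ∫ m, Bin(m, γ').real {k | t < |(k : ℝ) / m - γ|} ∂Bin(n, q') := by
        simpa using measureReal_card_filter_le_integral_binomial hmeas hindep hlaw hE hF
          (q := q') hq.symm hγq fun m k ↦ t < |(k : ℝ) / m - γ|
    _ ≤ Bin(n, q').real {m | (m : ℝ) ≤ q * n / 2} + 2 * exp (-(t ^ 2 * q * n)) :=
        integral_le_measureReal_add (integrable_binomial _) .of_discrete
          (fun _ _ ↦ measureReal_le_one) htail (by positivity)
    _ ≤ exp (-(q * n) / 8) + 2 * exp (-(t ^ 2 * q * n)) := by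
        gcongr
        exact binomial_real_le_half_mean_le n q'
end

section
/- Let (Z_i)_{i=1..n} be i.i.d. from ℙ on Z, E ⊆ Z with ℙ(E) = q > 0, F ⊆ Z, γ = ℙ(F | E), and γ̂ = (#{i : Z_i ∈ E ∩ F})/(#{i : Z_i ∈ E}) with 0/0 = 0. Then for any β ∈ (0,1): ℙ(γ̂ ≥ (1+β)·γ) ≤ exp(−q·n/8) + exp(−β²·q·γ·n/6) and ℙ(γ̂ ≤ (1−β)·γ) ≤ exp(−q·n/8) + exp(−β²·q·γ·n/4). -/
/-!
On `{γ̂ ≥ c}` (resp. `{γ̂ ≤ c}`) the i.i.d. sum `∑ᵢ (𝟙_{E∩F}(Zᵢ) - c 𝟙_E(Zᵢ))` is nonnegative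
(resp. nonpositive), even when no sample lies in `E`. Take `c = yγ` with `y = 1 ± β` and apply
the Chernoff bound at `t = log y`: each summand has moment generating function
`1 - q + q e^{-tc} (1 + γ (e^t - 1)) ≤ 1 - q + q e^{-γ (y log y - y + 1)}`, and
`y log y - y + 1` is at least `β²/3` for `y = 1 + β` and `β²/2` for `y = 1 - β`.
As `1 - q + q e^{-a} ≤ e^{-qa/2}` for `0 ≤ a ≤ 1`, the tails are at most `e^{-β²qγn/6}` and
`e^{-β²qγn/4}`.
-/

open MeasureTheory ProbabilityTheory
open scoped Classical

open Real Finset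

lemma exp_neg_le_one_sub_half {a : ℝ} (ha0 : 0 ≤ a) (ha1 : a ≤ 1) : exp (-a) ≤ 1 - a / 2 := by
  rw [exp_neg, inv_le_iff_one_le_mul₀ (exp_pos a)]
  nlinarith [quadratic_le_exp_of_nonneg ha0, mul_nonneg ha0 (by nlinarith : 0 ≤ 2 - a ^ 2)]

lemma one_sub_add_mul_le_exp_neg {q a x : ℝ} (hq : 0 ≤ q) (ha0 : 0 ≤ a) (ha1 : a ≤ 1)
    (hx : x ≤ exp (-a)) : 1 - q + q * x ≤ exp (-(q * a / 2)) :=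
  calc 1 - q + q * x ≤ 1 - q + q * (1 - a / 2) := by
        gcongr; exact hx.trans (exp_neg_le_one_sub_half ha0 ha1)
    _ = -(q * a / 2) + 1 := by ring
    _ ≤ exp (-(q * a / 2)) := add_one_le_exp _

lemma mul_exp_add_one_sub_mul_exp_le (γ t c : ℝ) :
    γ * exp (t * (1 - c)) + (1 - γ) * exp (-(t * c)) ≤ exp (γ * (exp t - 1) - t * c) :=
  calc γ * exp (t * (1 - c)) + (1 - γ) * exp (-(t * c))
      = exp (-(t * c)) * (γ * (exp t - 1) + 1) := by
        rw [show t * (1 - c) = t + -(t * c) by ring, exp_add]; ring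
    _ ≤ exp (-(t * c)) * exp (γ * (exp t - 1)) := by gcongr; exact add_one_le_exp _
    _ = exp (γ * (exp t - 1) - t * c) := by rw [← exp_add]; ring_nf

lemma sq_sub_one_div_three_le_mul_log_sub_add_one {y : ℝ} (hy1 : 1 ≤ y) (hy2 : y ≤ 2) :
    (y - 1) ^ 2 / 3 ≤ y * log y - y + 1 := by
  have hlog := le_log_one_add_of_nonneg (sub_nonneg.2 hy1)
  rw [add_sub_cancel, show y - 1 + 2 = y + 1 by ring] at hlog
  have hy : y + 1 ≠ 0 := by linarith
  have hgap : y * (2 * (y - 1) / (y + 1)) - y + 1 - (y - 1) ^ 2 / 3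
      = (y - 1) ^ 2 * (2 - y) / (3 * (y + 1)) := by
    field_simp; ring
  have : 0 ≤ (y - 1) ^ 2 * (2 - y) / (3 * (y + 1)) :=
    div_nonneg (mul_nonneg (sq_nonneg _) (by linarith)) (by linarith)
  calc (y - 1) ^ 2 / 3 ≤ y * (2 * (y - 1) / (y + 1)) - y + 1 := by linarith
    _ ≤ y * log y - y + 1 := by gcongr

lemma sq_sub_one_div_two_le_mul_log_sub_add_one {y : ℝ} (hy0 : 0 < y) (hy1 : y ≤ 1) :
    (y - 1) ^ 2 / 2 ≤ y * log y - y + 1 := by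
  have h := self_le_sinh_iff.2 (neg_nonneg.2 (log_nonpos hy0.le hy1))
  rw [sinh_neg, sinh_log hy0] at h
  have hmul := mul_le_mul_of_nonneg_left (show (y - y⁻¹) / 2 ≤ log y by linarith) hy0.le
  have : y * ((y - y⁻¹) / 2) = (y ^ 2 - 1) / 2 := by field_simp
  nlinarith

lemma sub_mul_nonneg_of_le_div {a b c : ℝ} (ha : 0 ≤ a) (hab : a ≤ b) (h : c ≤ a / b) :
    0 ≤ a - c * b := by
  rcases (ha.trans hab).eq_or_lt with hb | hb
  · simp [← hb, le_antisymm (hb ▸ hab) ha]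
  · linarith [(le_div_iff₀ hb).1 h]

lemma sub_mul_nonpos_of_div_le {a b c : ℝ} (ha : 0 ≤ a) (hab : a ≤ b) (h : a / b ≤ c) :
    a - c * b ≤ 0 := by
  rcases (ha.trans hab).eq_or_lt with hb | hb
  · simp [← hb, le_antisymm (hb ▸ hab) ha]
  · linarith [(div_le_iff₀ hb).1 h]

section Sample

variable {𝓩 ι : Type*} [Fintype ι]

noncomputable def ratioContrast (E F : Set 𝓩) (c : ℝ) (z : 𝓩) : ℝ :=
  (E ∩ F).indicator 1 z - c * E.indicator 1 z

noncomputable def empiricalRatio (E F : Set 𝓩) (z : ι → 𝓩) : ℝ :=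
  (#{i | z i ∈ E ∩ F} : ℝ) / #{i | z i ∈ E}

lemma measurable_ratioContrast [MeasurableSpace 𝓩] {E F : Set 𝓩} (hE : MeasurableSet E)
    (hF : MeasurableSet F) (c : ℝ) : Measurable (ratioContrast E F c) :=
  (measurable_const.indicator (hE.inter hF)).sub ((measurable_const.indicator hE).const_mul c)

lemma sum_ratioContrast (E F : Set 𝓩) (c : ℝ) (z : ι → 𝓩) :
    ∑ i, ratioContrast E F c (z i) = (#{i | z i ∈ E ∩ F} : ℝ) - c * #{i | z i ∈ E} := by
  simp only [ratioContrast, sum_sub_distrib, ← mul_sum, natCast_card_filter,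
    Set.indicator_apply, Pi.one_apply]

lemma card_filter_mem_inter_le (E F : Set 𝓩) (z : ι → 𝓩) :
    (#{i | z i ∈ E ∩ F} : ℝ) ≤ #{i | z i ∈ E} := by
  gcongr
  exact Set.inter_subset_left

lemma sum_ratioContrast_nonneg_of_le_empiricalRatio {E F : Set 𝓩} {c : ℝ} {z : ι → 𝓩}
    (h : c ≤ empiricalRatio E F z) : 0 ≤ ∑ i, ratioContrast E F c (z i) := by
  rw [sum_ratioContrast]
  exact sub_mul_nonneg_of_le_div (Nat.cast_nonneg _) (card_filter_mem_inter_le E F z) h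

lemma sum_ratioContrast_nonpos_of_empiricalRatio_le {E F : Set 𝓩} {c : ℝ} {z : ι → 𝓩}
    (h : empiricalRatio E F z ≤ c) : ∑ i, ratioContrast E F c (z i) ≤ 0 := by
  rw [sum_ratioContrast]
  exact sub_mul_nonpos_of_div_le (Nat.cast_nonneg _) (card_filter_mem_inter_le E F z) h

lemma exp_mul_ratioContrast (E F : Set 𝓩) (c t : ℝ) (z : 𝓩) :
    exp (t * ratioContrast E F c z) = 1 + (E ∩ F).indicator (fun _ => exp (t * (1 - c)) - 1) z
      + (E \ F).indicator (fun _ => exp (-(t * c)) - 1) z := by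
  by_cases hE : z ∈ E <;> by_cases hF : z ∈ F <;>
    simp [ratioContrast, hE, hF]

end Sample

section Moments

variable {𝓩 : Type*} [MeasurableSpace 𝓩] {ν : Measure 𝓩} [IsProbabilityMeasure ν]
  {E F : Set 𝓩}

lemma integrable_exp_mul_ratioContrast (hE : MeasurableSet E) (hF : MeasurableSet F)
    (c t : ℝ) : Integrable (fun z => exp (t * ratioContrast E F c z)) ν := by
  simp_rw [exp_mul_ratioContrast]
  exact ((integrable_const _).add ((integrable_const _).indicator (hE.inter hF))).add
    ((integrable_const _).indicator (hE.diff hF))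

lemma mgf_ratioContrast (hE : MeasurableSet E) (hF : MeasurableSet F) (c t : ℝ) :
    mgf (ratioContrast E F c) ν t = 1 + (exp (t * (1 - c)) - 1) * ν.real (E ∩ F)
      + (exp (-(t * c)) - 1) * ν.real (E \ F) := by
  rw [mgf]
  simp_rw [exp_mul_ratioContrast]
  rw [integral_add ((integrable_const _).add ((integrable_const _).indicator (hE.inter hF)))
      ((integrable_const _).indicator (hE.diff hF)),
    integral_add (integrable_const _) ((integrable_const _).indicator (hE.inter hF)),
    integral_const, integral_indicator_const _ (hE.inter hF),
    integral_indicator_const _ (hE.diff hF)]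
  simp [mul_comm]

lemma mgf_ratioContrast_le {γ y a : ℝ} (hE : MeasurableSet E) (hF : MeasurableSet F)
    (hqγ : ν.real (E ∩ F) = ν.real E * γ) (hy : 0 < y) (ha0 : 0 ≤ a) (ha1 : a ≤ 1)
    (ha : a ≤ γ * (y * log y - y + 1)) :
    mgf (ratioContrast E F (y * γ)) ν (log y) ≤ exp (-(ν.real E * a / 2)) := by
  have hdiff : ν.real (E \ F) = ν.real E - ν.real E * γ := by
    rw [← hqγ, ← measureReal_inter_add_sdiff (s := E) hF]; ring
  rw [mgf_ratioContrast hE hF, hdiff, hqγ]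
  set q := ν.real E
  have hmix : γ * exp (log y * (1 - y * γ)) + (1 - γ) * exp (-(log y * (y * γ))) ≤ exp (-a) := by
    refine (mul_exp_add_one_sub_mul_exp_le γ (log y) (y * γ)).trans ?_
    rw [exp_log hy, exp_le_exp]
    linarith
  calc 1 + (exp (log y * (1 - y * γ)) - 1) * (q * γ) + (exp (-(log y * (y * γ))) - 1) * (q - q * γ)
      = 1 - q + q * (γ * exp (log y * (1 - y * γ)) + (1 - γ) * exp (-(log y * (y * γ)))) := by
        ring
    _ ≤ exp (-(q * a / 2)) := one_sub_add_mul_le_exp_neg measureReal_nonneg ha0 ha1 hmix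

end Moments

section IID

variable {Ω 𝓩 ι : Type*} [MeasurableSpace Ω] [MeasurableSpace 𝓩] [Fintype ι]
  {μ : Measure Ω} {ν : Measure 𝓩} {Z : ι → Ω → 𝓩} {g : 𝓩 → ℝ} {t : ℝ}

lemma mgf_sum_comp_eq_pow (hmeas : ∀ i, Measurable (Z i)) (hindep : iIndepFun Z μ)
    (hlaw : ∀ i, μ.map (Z i) = ν) (hg : Measurable g) (t : ℝ) :
    mgf (fun ω => ∑ i, g (Z i ω)) μ t = mgf g ν t ^ Fintype.card ι := by
  have hcomp : ∀ i, mgf (g ∘ Z i) μ t = mgf g ν t := fun i => by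
    rw [← hlaw i, mgf_map (hmeas i).aemeasurable (by fun_prop)]
  rw [show (fun ω => ∑ i, g (Z i ω)) = ∑ i, g ∘ Z i by ext; simp,
    (hindep.comp (fun _ => g) fun _ => hg).mgf_sum (fun i => hg.comp (hmeas i)),
    prod_congr rfl fun i _ => hcomp i, prod_const, card_univ]

lemma integrable_exp_mul_sum_comp [IsFiniteMeasure μ] (hmeas : ∀ i, Measurable (Z i))
    (hindep : iIndepFun Z μ) (hlaw : ∀ i, μ.map (Z i) = ν) (hg : Measurable g)
    (hint : Integrable (fun z => exp (t * g z)) ν) :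
    Integrable (fun ω => exp (t * ∑ i, g (Z i ω))) μ := by
  have hint_i : ∀ i, Integrable (fun ω => exp (t * g (Z i ω))) μ := fun i =>
    (integrable_map_measure (g := fun z => exp (t * g z)) (by fun_prop)
      (hmeas i).aemeasurable).1 (hlaw i ▸ hint)
  simpa using (hindep.comp (fun _ => g) fun _ => hg).integrable_exp_mul_sum
    (fun i => hg.comp (hmeas i)) (s := univ) fun i _ => hint_i i

lemma measureReal_le_sum_comp_le [IsFiniteMeasure μ] (hmeas : ∀ i, Measurable (Z i))
    (hindep : iIndepFun Z μ) (hlaw : ∀ i, μ.map (Z i) = ν) (hg : Measurable g) (ε : ℝ) (ht : 0 ≤ t)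
    (hint : Integrable (fun z => exp (t * g z)) ν) :
    μ.real {ω | ε ≤ ∑ i, g (Z i ω)} ≤ exp (-t * ε) * mgf g ν t ^ Fintype.card ι := by
  rw [← mgf_sum_comp_eq_pow hmeas hindep hlaw hg]
  exact measure_ge_le_exp_mul_mgf ε ht (integrable_exp_mul_sum_comp hmeas hindep hlaw hg hint)

lemma measureReal_sum_comp_le_le [IsFiniteMeasure μ] (hmeas : ∀ i, Measurable (Z i))
    (hindep : iIndepFun Z μ) (hlaw : ∀ i, μ.map (Z i) = ν) (hg : Measurable g) (ε : ℝ) (ht : t ≤ 0)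
    (hint : Integrable (fun z => exp (t * g z)) ν) :
    μ.real {ω | ∑ i, g (Z i ω) ≤ ε} ≤ exp (-t * ε) * mgf g ν t ^ Fintype.card ι := by
  rw [← mgf_sum_comp_eq_pow hmeas hindep hlaw hg]
  exact measure_le_le_exp_mul_mgf ε ht (integrable_exp_mul_sum_comp hmeas hindep hlaw hg hint)

end IID

section Tails

variable {Ω 𝓩 ι : Type*} [MeasurableSpace Ω] [MeasurableSpace 𝓩] [Fintype ι]
  {μ : Measure Ω} [IsFiniteMeasure μ] {ν : Measure 𝓩} [IsProbabilityMeasure ν]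
  {Z : ι → Ω → 𝓩} {E F : Set 𝓩} {q γ β : ℝ}

lemma measureReal_le_empiricalRatio_le (hmeas : ∀ i, Measurable (Z i))
    (hindep : iIndepFun Z μ) (hlaw : ∀ i, μ.map (Z i) = ν)
    (hE : MeasurableSet E) (hF : MeasurableSet F)
    (hq : ν.real E = q) (hqγ : ν.real (E ∩ F) = q * γ) (hγ0 : 0 ≤ γ) (hγ1 : γ ≤ 1)
    (hβ0 : 0 ≤ β) (hβ1 : β ≤ 1) :
    μ.real {ω | (1 + β) * γ ≤ empiricalRatio E F (fun i => Z i ω)}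
      ≤ exp (-(β ^ 2 * q * γ * Fintype.card ι) / 6) := by
  subst hq
  have hlog := sq_sub_one_div_three_le_mul_log_sub_add_one (y := 1 + β) (by linarith) (by linarith)
  rw [add_sub_cancel_left] at hlog
  have hmgf : mgf (ratioContrast E F ((1 + β) * γ)) ν (log (1 + β))
      ≤ exp (-(ν.real E * (γ * (β ^ 2 / 3)) / 2)) :=
    mgf_ratioContrast_le hE hF hqγ (by linarith) (by positivity)
      (by nlinarith [mul_le_one₀ hγ1 (sq_nonneg β) (pow_le_one₀ hβ0 hβ1)])
      (mul_le_mul_of_nonneg_left hlog hγ0)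
  calc _ ≤ μ.real {ω | 0 ≤ ∑ i, ratioContrast E F ((1 + β) * γ) (Z i ω)} :=
        measureReal_mono fun _ => sum_ratioContrast_nonneg_of_le_empiricalRatio
    _ ≤ exp (-log (1 + β) * 0)
          * mgf (ratioContrast E F ((1 + β) * γ)) ν (log (1 + β)) ^ Fintype.card ι :=
        measureReal_le_sum_comp_le hmeas hindep hlaw (measurable_ratioContrast hE hF _) 0
          (log_nonneg (by linarith)) (integrable_exp_mul_ratioContrast hE hF _ _)
    _ ≤ exp (-(ν.real E * (γ * (β ^ 2 / 3)) / 2)) ^ Fintype.card ι := by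
        rw [mul_zero, exp_zero, one_mul]
        exact pow_le_pow_left₀ mgf_nonneg hmgf _
    _ = _ := by rw [← exp_nat_mul]; ring_nf

lemma measureReal_empiricalRatio_le_le (hmeas : ∀ i, Measurable (Z i))
    (hindep : iIndepFun Z μ) (hlaw : ∀ i, μ.map (Z i) = ν)
    (hE : MeasurableSet E) (hF : MeasurableSet F)
    (hq : ν.real E = q) (hqγ : ν.real (E ∩ F) = q * γ) (hγ0 : 0 ≤ γ) (hγ1 : γ ≤ 1)
    (hβ0 : 0 ≤ β) (hβ1 : β < 1) :
    μ.real {ω | empiricalRatio E F (fun i => Z i ω) ≤ (1 - β) * γ}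
      ≤ exp (-(β ^ 2 * q * γ * Fintype.card ι) / 4) := by
  subst hq
  have hlog := sq_sub_one_div_two_le_mul_log_sub_add_one (y := 1 - β) (by linarith) (by linarith)
  rw [sub_sub_cancel_left, neg_sq] at hlog
  have hmgf : mgf (ratioContrast E F ((1 - β) * γ)) ν (log (1 - β))
      ≤ exp (-(ν.real E * (γ * (β ^ 2 / 2)) / 2)) :=
    mgf_ratioContrast_le hE hF hqγ (by linarith) (by positivity)
      (by nlinarith [mul_le_one₀ hγ1 (sq_nonneg β) (pow_le_one₀ hβ0 hβ1.le)])
      (mul_le_mul_of_nonneg_left hlog hγ0)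
  calc _ ≤ μ.real {ω | ∑ i, ratioContrast E F ((1 - β) * γ) (Z i ω) ≤ 0} :=
        measureReal_mono fun _ => sum_ratioContrast_nonpos_of_empiricalRatio_le
    _ ≤ exp (-log (1 - β) * 0)
          * mgf (ratioContrast E F ((1 - β) * γ)) ν (log (1 - β)) ^ Fintype.card ι :=
        measureReal_sum_comp_le_le hmeas hindep hlaw (measurable_ratioContrast hE hF _) 0
          (log_nonpos (by linarith) (by linarith)) (integrable_exp_mul_ratioContrast hE hF _ _)
    _ ≤ exp (-(ν.real E * (γ * (β ^ 2 / 2)) / 2)) ^ Fintype.card ι := by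
        rw [mul_zero, exp_zero, one_mul]
        exact pow_le_pow_left₀ mgf_nonneg hmgf _
    _ = _ := by rw [← exp_nat_mul]; ring_nf

end Tails

/-- multiplicative concentration bounds for an empirical
conditional-probability estimate.  Setup as in Statement 13:  `Z₁,…,Zₙ` i.i.d. with
law `ν`, `q = ν(E) > 0`, `γ = ν(F ∣ E)`, and `γ̂` the empirical estimate with the
convention `0/0 = 0`.  Then for `β ∈ (0,1)`:
`ℙ(γ̂ ≥ (1+β)γ) ≤ exp(−qn/8) + exp(−β²qγn/6)` and
`ℙ(γ̂ ≤ (1−β)γ) ≤ exp(−qn/8) + exp(−β²qγn/4)`. -/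
theorem stmt16 {Ω 𝓩 : Type*} [MeasurableSpace Ω] [MeasurableSpace 𝓩]
    (μ : Measure Ω) [IsProbabilityMeasure μ]
    (ν : Measure 𝓩) [IsProbabilityMeasure ν]
    (n : ℕ) (Z : Fin n → Ω → 𝓩)
    (hmeas : ∀ i, Measurable (Z i))
    (hindep : iIndepFun Z μ)
    (hlaw : ∀ i, μ.map (Z i) = ν)
    (E F : Set 𝓩) (hE : MeasurableSet E) (hF : MeasurableSet F)
    (q γ : ℝ) (hq : q = (ν E).toReal) (hq0 : 0 < q)
    (hγ : γ = (ν (E ∩ F)).toReal / q)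
    (γhat : Ω → ℝ)
    (hγhat : ∀ ω, γhat ω =
      ((Finset.univ.filter fun i => Z i ω ∈ E ∩ F).card : ℝ) /
      ((Finset.univ.filter fun i => Z i ω ∈ E).card : ℝ))
    (β : ℝ) (hβ0 : 0 < β) (hβ1 : β < 1) :
    μ {ω | (1 + β) * γ ≤ γhat ω} ≤
      ENNReal.ofReal (Real.exp (-(q * n)/8) + Real.exp (-(β^2 * q * γ * n)/6)) ∧
    μ {ω | γhat ω ≤ (1 - β) * γ} ≤
      ENNReal.ofReal (Real.exp (-(q * n)/8) + Real.exp (-(β^2 * q * γ * n)/4)) := by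
  have hqE : ν.real E = q := hq.symm
  have hqγ : ν.real (E ∩ F) = q * γ := by rw [hγ, measureReal_def]; field_simp
  have hγ0 : 0 ≤ γ := hγ ▸ div_nonneg ENNReal.toReal_nonneg hq0.le
  have hγ1 : γ ≤ 1 := by
    rw [hγ, div_le_one hq0, hq]; exact measureReal_mono Set.inter_subset_left
  obtain rfl : γhat = fun ω => empiricalRatio E F (fun i => Z i ω) := funext hγhat
  have hcard : (Fintype.card (Fin n) : ℝ) = n := by rw [Fintype.card_fin]
  constructor <;> rw [← ofReal_measureReal] <;> refine ENNReal.ofReal_le_ofReal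
    (le_add_of_nonneg_of_le (exp_pos _).le (hcard ▸ ?_))
  · exact measureReal_le_empiricalRatio_le hmeas hindep hlaw hE hF hqE hqγ hγ0 hγ1 hβ0.le hβ1.le
  · exact measureReal_empiricalRatio_le_le hmeas hindep hlaw hE hF hqE hqγ hγ0 hγ1 hβ0.le hβ1
end
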